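/- arXiv:2204.06405 — 5 statements merged into one kernel-verified Lean document; each statement's English description precedes it below -/
import Mathlib

section
/- For m-almost every x in (0,1) with binary expansion 0.x₁x₂x₃…, the asymptotic density of the set of n ∈ ℕ such that ∑_{l=0}^{n} C(n,l)·x_{l+1} ≡ 0 (mod 2) equals 1/2, where C(n,l) denotes the binomial coefficient and m is Lebesgue measure on [0,1]. -/
open Filter MeasureTheory

/-- The `i`-th binary digit of `x ∈ (0,1)`, i.e. `x_i` in `x = 0.x₁x₂x₃…`. -/
noncomputable def binDigit (x : ℝ) (i : ℕ) : ℕ := ⌊x * 2 ^ i⌋₊ % 2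

/-!
Let `E n` be the set of `x` for which `∑_{l ≤ n} C(n,l) x_{l+1}` is even. Since `C(n,n) = 1` and
`C(n,l) = 0` for `l > n`, membership in `E n` prescribes the parity of the digit `x_{n+1}` as a
function of `x_1, …, x_n`. The digit `x_{n+1}` is a fair coin independent of the first `n` digits,
so `E n` has measure `1/2` and is independent of every event determined by the first `n` digits,
in particular of `E a` for `a < n`. The indicators of the `E n` are therefore pairwise independent
and identically distributed, and Etemadi's strong law of large numbers, which only needs pairwise
independence, gives density `1/2` almost surely.
-/

open ProbabilityTheory Finset
open scoped ENNReal

lemma ProbabilityTheory.IndepSet.indepFun_indicator {Ω M : Type*} {mΩ : MeasurableSpace Ω}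
    {μ : Measure Ω} [Zero M] [MeasurableSpace M] {s t : Set Ω} (h : IndepSet s t μ) (c d : M) :
    IndepFun (s.indicator fun _ => c) (t.indicator fun _ => d) μ :=
  (IndepFun_iff_Indep _ _ _).2 <| indep_of_indep_of_le_right
    (indep_of_indep_of_le_left h
      (MeasurableSpace.comap_indicator_const_le_generateFrom_singleton s c))
    (MeasurableSpace.comap_indicator_const_le_generateFrom_singleton t d)

lemma ProbabilityTheory.identDistrib_indicator_one {Ω Ω' M : Type*} {mΩ : MeasurableSpace Ω}
    {mΩ' : MeasurableSpace Ω'} {μ : Measure Ω} {ν : Measure Ω'} [IsProbabilityMeasure μ]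
    [IsProbabilityMeasure ν] [Zero M] [One M] [MeasurableSpace M]
    {s : Set Ω} {t : Set Ω'} (hs : MeasurableSet s) (ht : MeasurableSet t) (h : μ s = ν t) :
    IdentDistrib (s.indicator (1 : Ω → M)) (t.indicator (1 : Ω' → M)) μ ν where
  aemeasurable_fst := (measurable_one.indicator hs).aemeasurable
  aemeasurable_snd := (measurable_one.indicator ht).aemeasurable
  map_eq := by
    classical
    ext B hB
    rw [Measure.map_apply (measurable_one.indicator hs) hB,
      Measure.map_apply (measurable_one.indicator ht) hB]
    simp only [Pi.one_def, Set.indicator_const_preimage_eq_union]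
    split_ifs <;> simp [h, prob_compl_eq_one_sub, hs, ht]

instance : IsProbabilityMeasure (volume.restrict (Set.Ioo (0:ℝ) 1)) := ⟨by simp⟩

lemma restrict_Ioo_floor_mul_preimage_singleton {n k : ℕ} (hk : k < n) :
    volume.restrict (Set.Ioo (0:ℝ) 1) ((fun x : ℝ => ⌊x * n⌋₊) ⁻¹' {k}) = (n : ℝ≥0∞)⁻¹ := by
  have hn : (0 : ℝ) < n := by exact_mod_cast (Nat.zero_le k).trans_lt hk
  have hcell : (fun x : ℝ => ⌊x * n⌋₊) ⁻¹' {k} ∩ Set.Ico 0 1 =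
      Set.Ico ((k : ℝ) / n) ((k + 1) / n) := by
    ext x
    simp only [Set.mem_inter_iff, Set.mem_preimage, Set.mem_singleton_iff, Set.mem_Ico,
      div_le_iff₀ hn, lt_div_iff₀ hn]
    constructor
    · rintro ⟨hx, hx0, -⟩
      exact (Nat.floor_eq_iff (by positivity)).1 hx
    · rintro ⟨hkx, hxk⟩
      have hx0 : 0 ≤ x := nonneg_of_mul_nonneg_left ((Nat.cast_nonneg k).trans hkx) hn
      refine ⟨(Nat.floor_eq_iff (by positivity)).2 ⟨hkx, hxk⟩, hx0, ?_⟩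
      have : (k : ℝ) + 1 ≤ n := by exact_mod_cast hk
      nlinarith
  rw [Measure.restrict_congr_set Ioo_ae_eq_Ico, Measure.restrict_apply' measurableSet_Ico, hcell,
    Real.volume_Ico, add_div, add_sub_cancel_left, ENNReal.ofReal_div_of_pos hn]
  simp

lemma restrict_Ioo_setOf_floor_mul {n : ℕ} (hn : n ≠ 0) (P : ℕ → Prop) [DecidablePred P] :
    volume.restrict (Set.Ioo (0:ℝ) 1) {x | P ⌊x * n⌋₊} = #{k ∈ range n | P k} / n := by
  have hsupp : {x : ℝ | P ⌊x * n⌋₊} ∩ Set.Ioo 0 1 =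
      (fun x : ℝ => ⌊x * n⌋₊) ⁻¹' ↑{k ∈ range n | P k} ∩ Set.Ioo 0 1 := by
    ext x
    simp only [Set.mem_inter_iff, Set.mem_ofPred_eq, Set.mem_preimage, coe_filter, mem_range,
      Set.mem_Ioo]
    constructor
    · rintro ⟨hP, hx0, hx1⟩
      refine ⟨⟨(Nat.floor_lt (by positivity)).2 ?_, hP⟩, hx0, hx1⟩
      have : (0 : ℝ) < n := by exact_mod_cast Nat.pos_of_ne_zero hn
      nlinarith
    · rintro ⟨⟨-, hP⟩, hx⟩
      exact ⟨hP, hx⟩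
  have hmeas : Measurable fun x : ℝ => ⌊x * n⌋₊ := (measurable_id.mul_const _).nat_floor
  rw [Measure.restrict_apply' measurableSet_Ioo, hsupp, ← Measure.restrict_apply' measurableSet_Ioo,
    ← sum_measure_preimage_singleton _ fun k _ => hmeas (measurableSet_singleton k),
    sum_congr rfl fun k hk =>
      restrict_Ioo_floor_mul_preimage_singleton (mem_range.1 (mem_filter.1 hk).1)]
  simp [div_eq_mul_inv]

lemma binDigit_eq_floor_div (x : ℝ) {i N : ℕ} (h : i ≤ N) :
    binDigit x i = ⌊x * 2 ^ N⌋₊ / 2 ^ (N - i) % 2 := by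
  rw [binDigit, ← Nat.floor_div_natCast, Nat.cast_pow, Nat.cast_ofNat, mul_div_assoc,
    div_eq_mul_inv, ← pow_sub₀ _ two_ne_zero (Nat.sub_le N i), Nat.sub_sub_self h]

-- Of `2 * m` and `2 * m + 1`, exactly one has the parity prescribed by `f m`.
lemma card_filter_range_two_mul (n : ℕ) (P : ℕ → Prop) [DecidablePred P] (f : ℕ → ℕ) :
    #{j ∈ range (2 * n) | P (j / 2) ∧ (j % 2 + f (j / 2)) % 2 = 0} = #{m ∈ range n | P m} := by
  have hhalf (m : ℕ) : (2 * m + f m % 2) / 2 = m := by omega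
  refine card_nbij' (· / 2) (fun m => 2 * m + f m % 2) ?_ ?_ ?_ ?_ <;> intro j hj <;>
    simp only [coe_filter, mem_range, Set.mem_ofPred_eq] at hj ⊢
  · exact ⟨by omega, hj.2.1⟩
  · rw [hhalf]
    exact ⟨by omega, hj.2, by omega⟩
  · omega
  · exact hhalf j

-- `⌊x * 2 ^ N⌋₊` encodes the digits `x_1, …, x_N`; the digit `x_{N+1}` is a fair coin given them.
lemma restrict_Ioo_setOf_floor_and_binDigit (N : ℕ) (P : ℕ → Prop) (f : ℕ → ℕ) :
    volume.restrict (Set.Ioo (0:ℝ) 1)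
        {x | P ⌊x * 2 ^ N⌋₊ ∧ (binDigit x (N + 1) + f ⌊x * 2 ^ N⌋₊) % 2 = 0} =
      volume.restrict (Set.Ioo (0:ℝ) 1) {x | P ⌊x * 2 ^ N⌋₊} / 2 := by
  classical
  have hfloor (x : ℝ) : ⌊x * 2 ^ N⌋₊ = ⌊x * ((2 ^ (N + 1) : ℕ) : ℝ)⌋₊ / 2 := by
    rw [← Nat.cast_two (R := ℝ), ← Nat.floor_div_natCast]
    push_cast
    ring_nf
  have hset : {x : ℝ | P ⌊x * 2 ^ N⌋₊ ∧ (binDigit x (N + 1) + f ⌊x * 2 ^ N⌋₊) % 2 = 0} =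
      {x | (fun j => P (j / 2) ∧ (j % 2 + f (j / 2)) % 2 = 0)
        ⌊x * ((2 ^ (N + 1) : ℕ) : ℝ)⌋₊} := by
    ext x
    simp only [Set.mem_ofPred_eq, hfloor, binDigit, Nat.cast_pow, Nat.cast_ofNat]
  have hpow : (2 : ℝ) ^ N = ((2 ^ N : ℕ) : ℝ) := by push_cast; rfl
  rw [hset]
  refine (restrict_Ioo_setOf_floor_mul (pow_ne_zero (N + 1) two_ne_zero)
    (fun j => P (j / 2) ∧ (j % 2 + f (j / 2)) % 2 = 0)).trans ?_
  rw [hpow, restrict_Ioo_setOf_floor_mul (pow_ne_zero N two_ne_zero), pow_succ',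
    card_filter_range_two_mul, ENNReal.div_eq_inv_mul, ENNReal.div_eq_inv_mul,
    ENNReal.div_eq_inv_mul, ← mul_assoc, ← ENNReal.mul_inv (by simp) (by simp)]
  push_cast
  ring_nf

noncomputable def binomialDigitSum (x : ℝ) (n : ℕ) : ℕ :=
  ∑ l ∈ range (n + 1), n.choose l * binDigit x (l + 1)

def binomialEvenSet (n : ℕ) : Set ℝ := {x | binomialDigitSum x n % 2 = 0}

lemma binomialDigitSum_eq_floor_div (x : ℝ) {n N : ℕ} (h : n < N) :
    binomialDigitSum x n =
      ∑ l ∈ range (n + 1), n.choose l * (⌊x * 2 ^ N⌋₊ / 2 ^ (N - (l + 1)) % 2) :=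
  sum_congr rfl fun l hl => by rw [binDigit_eq_floor_div x (show l + 1 ≤ N by grind)]

lemma binomialDigitSum_eq_binDigit_add (x : ℝ) (n : ℕ) :
    binomialDigitSum x n = binDigit x (n + 1) +
      ∑ l ∈ range n, n.choose l * (⌊x * 2 ^ n⌋₊ / 2 ^ (n - (l + 1)) % 2) := by
  rw [binomialDigitSum, sum_range_succ, Nat.choose_self, one_mul, add_comm]
  exact congrArg _ (sum_congr rfl fun l hl => by
    rw [binDigit_eq_floor_div x (show l + 1 ≤ n by grind)])

lemma measurableSet_binomialEvenSet (n : ℕ) : MeasurableSet (binomialEvenSet n) := by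
  have hdigit (i : ℕ) : Measurable fun x => binDigit x i :=
    (measurable_from_top (f := fun k : ℕ => k % 2)).comp (measurable_id.mul_const _).nat_floor
  exact (Finset.measurable_sum _ fun l _ => (hdigit (l + 1)).const_mul _)
    (MeasurableSet.of_discrete (s := {k : ℕ | k % 2 = 0}))

lemma restrict_Ioo_setOf_floor_inter_binomialEvenSet (n : ℕ) (P : ℕ → Prop) :
    volume.restrict (Set.Ioo (0:ℝ) 1) ({x | P ⌊x * 2 ^ n⌋₊} ∩ binomialEvenSet n) =
      volume.restrict (Set.Ioo (0:ℝ) 1) {x | P ⌊x * 2 ^ n⌋₊} / 2 := by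
  rw [← restrict_Ioo_setOf_floor_and_binDigit n P
    fun m => ∑ l ∈ range n, n.choose l * (m / 2 ^ (n - (l + 1)) % 2)]
  congr 1
  ext x
  simp only [binomialEvenSet, Set.mem_inter_iff, Set.mem_ofPred_eq,
    binomialDigitSum_eq_binDigit_add]

lemma restrict_Ioo_binomialEvenSet (n : ℕ) :
    volume.restrict (Set.Ioo (0:ℝ) 1) (binomialEvenSet n) = 2⁻¹ := by
  simpa using restrict_Ioo_setOf_floor_inter_binomialEvenSet n fun _ => True

lemma indepSet_binomialEvenSet_of_lt {a b : ℕ} (h : a < b) :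
    IndepSet (binomialEvenSet a) (binomialEvenSet b) (volume.restrict (Set.Ioo (0:ℝ) 1)) := by
  rw [indepSet_iff_measure_inter_eq_mul (measurableSet_binomialEvenSet a)
    (measurableSet_binomialEvenSet b) _, restrict_Ioo_binomialEvenSet b, ← div_eq_mul_inv]
  obtain ⟨P, hP⟩ : ∃ P : ℕ → Prop, binomialEvenSet a = {x | P ⌊x * 2 ^ b⌋₊} :=
    ⟨fun m => (∑ l ∈ range (a + 1), a.choose l * (m / 2 ^ (b - (l + 1)) % 2)) % 2 = 0, by
      ext x
      rw [binomialEvenSet, Set.mem_ofPred_eq, Set.mem_ofPred_eq,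
        binomialDigitSum_eq_floor_div x h]⟩
  rw [hP]
  exact restrict_Ioo_setOf_floor_inter_binomialEvenSet b P

lemma indepSet_binomialEvenSet {a b : ℕ} (h : a ≠ b) :
    IndepSet (binomialEvenSet a) (binomialEvenSet b) (volume.restrict (Set.Ioo (0:ℝ) 1)) := by
  rcases h.lt_or_gt with h | h
  · exact indepSet_binomialEvenSet_of_lt h
  · exact (indepSet_binomialEvenSet_of_lt h).symm

/-- For Lebesgue-a.e. `x ∈ (0,1)`, the asymptotic density of the set of `n` with
`∑_{l=0}^{n} C(n,l)·x_{l+1} ≡ 0 (mod 2)` equals `1/2`. -/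
theorem density_binomial_sum_even :
    ∀ᵐ x ∂(MeasureTheory.volume.restrict (Set.Ioo (0:ℝ) 1)),
      Tendsto (fun p : ℕ =>
        (((Finset.range p).filter (fun n =>
          (∑ l ∈ Finset.range (n + 1), Nat.choose n l * binDigit x (l + 1)) % 2 = 0)).card : ℝ)
          / p) atTop (nhds (1 / 2)) := by
  set X : ℕ → ℝ → ℝ := fun n => (binomialEvenSet n).indicator 1
  have hlaw := strong_law_ae_real X
    ((integrable_const 1).indicator (measurableSet_binomialEvenSet 0))
    (fun _ _ h => (indepSet_binomialEvenSet h).indepFun_indicator 1 1)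
    (fun n => identDistrib_indicator_one (measurableSet_binomialEvenSet n)
      (measurableSet_binomialEvenSet 0)
      (by rw [restrict_Ioo_binomialEvenSet, restrict_Ioo_binomialEvenSet]))
  have hmean : (volume.restrict (Set.Ioo (0:ℝ) 1))[X 0] = 1 / 2 := by
    rw [integral_indicator_one (measurableSet_binomialEvenSet 0), measureReal_def,
      restrict_Ioo_binomialEvenSet]
    norm_num
  filter_upwards [hlaw] with x hx
  rw [hmean] at hx
  convert hx using 3 with p
  rw [natCast_card_filter]
  exact sum_congr rfl fun n _ => by simp [X, Set.indicator_apply, binomialEvenSet, binomialDigitSum]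
end

section
/- Let T : (ℤ/aℤ)^ℤ → (ℤ/aℤ)^ℤ be the linear cellular automaton (T x)_n = ∑_{i=-r}^{r} λ_i x_{n+i} (mod a) with both λ_{-r} and λ_r units in ℤ/aℤ and r ≥ 1. Then T is surjective. -/
/-!
For a local rule `(T x)_n = ∑_{i=p}^{q} λ_i x_{n+i}` whose outermost coefficients `λ_p`, `λ_q`
are units, the equation `(T x)_n = y_n` can be solved for `x_{n+q}` as well as for `x_{n+p}`. Starting from `x = 0` on the block `[p, q)`, a
preimage of `y` is therefore built by recursion to the right (solving for `x_{n+q}`, `n ≥ 0`) and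
to the left (solving for `x_{n+p}`, `n < 0`).
-/

open Finset Ring

namespace LinearCA

variable {R : Type*} [Ring R]

noncomputable def map (lam : ℤ → R) (p q : ℤ) (x : ℤ → R) : ℤ → R :=
  fun n => ∑ i ∈ Icc p q, lam i * x (n + i)

variable {lam : ℤ → R} {p q : ℤ}

theorem map_eq_iff_right (hq : IsUnit (lam q)) (hpq : p ≤ q) (x : ℤ → R) (n : ℤ) (z : R) :
    map lam p q x n = z ↔ x (n + q) = (lam q)⁻¹ʳ * (z - ∑ i ∈ Ico p q, lam i * x (n + i)) := by
  rw [map, ← Ico_insert_right hpq, sum_insert (by simp), eq_comm (a := x _),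
    inverse_mul_eq_iff_eq_mul _ _ _ hq, sub_eq_iff_eq_add, eq_comm]

theorem map_eq_iff_left (hp : IsUnit (lam p)) (hpq : p ≤ q) (x : ℤ → R) (n : ℤ) (z : R) :
    map lam p q x n = z ↔ x (n + p) = (lam p)⁻¹ʳ * (z - ∑ i ∈ Ioc p q, lam i * x (n + i)) := by
  rw [map, ← Ioc_insert_left hpq, sum_insert (by simp), eq_comm (a := x _),
    inverse_mul_eq_iff_eq_mul _ _ _ hp, sub_eq_iff_eq_add, eq_comm]

variable (lam p q) in
noncomputable def preimage (y : ℤ → R) : ℤ → R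
  | k =>
    if q ≤ k then
      (lam q)⁻¹ʳ * (y (k - q) - ∑ i ∈ (Ico p q).attach, lam i * preimage y (k - q + i))
    else if k < p then
      (lam p)⁻¹ʳ * (y (k - p) - ∑ i ∈ (Ioc p q).attach, lam i * preimage y (k - p + i))
    else 0
termination_by k => (if q ≤ k then k - q + 1 else if k < p then p - k else 0).toNat
decreasing_by
  all_goals
    have hi := i.2
    simp only [mem_Ico, mem_Ioc] at hi
    split_ifs <;> omega

theorem preimage_of_le (y : ℤ → R) {k : ℤ} (hk : q ≤ k) :
    preimage lam p q y k =
      (lam q)⁻¹ʳ * (y (k - q) - ∑ i ∈ Ico p q, lam i * preimage lam p q y (k - q + i)) := by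
  rw [preimage, if_pos hk, sum_attach _ fun i => lam i * preimage lam p q y (k - q + i)]

theorem preimage_of_lt (hpq : p ≤ q) (y : ℤ → R) {k : ℤ} (hk : k < p) :
    preimage lam p q y k =
      (lam p)⁻¹ʳ * (y (k - p) - ∑ i ∈ Ioc p q, lam i * preimage lam p q y (k - p + i)) := by
  rw [preimage, if_neg (by omega), if_pos hk,
    sum_attach _ fun i => lam i * preimage lam p q y (k - p + i)]

theorem map_preimage (hp : IsUnit (lam p)) (hq : IsUnit (lam q)) (hpq : p ≤ q) (y : ℤ → R) :
    map lam p q (preimage lam p q y) = y := by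
  funext n
  rcases le_or_gt 0 n with hn | hn
  · rw [map_eq_iff_right hq hpq, preimage_of_le y (by omega), add_sub_cancel_right]
  · rw [map_eq_iff_left hp hpq, preimage_of_lt hpq y (by omega), add_sub_cancel_right]

theorem map_surjective (hp : IsUnit (lam p)) (hq : IsUnit (lam q)) (hpq : p ≤ q) :
    Function.Surjective (map lam p q) :=
  fun y => ⟨preimage lam p q y, map_preimage hp hq hpq y⟩

end LinearCA

theorem lca_surjective_general (a r : ℕ) (lam : ℤ → ZMod a)
    (h₁ : IsUnit (lam (-(r : ℤ)))) (h₂ : IsUnit (lam (r : ℤ)))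
    (T : (ℤ → ZMod a) → (ℤ → ZMod a))
    (hT : ∀ x n, T x n = ∑ i ∈ Finset.Icc (-(r : ℤ)) (r : ℤ), lam i * x (n + i)) :
    Function.Surjective T := by
  obtain rfl : T = LinearCA.map lam (-r) r := funext fun x => funext (hT x)
  exact LinearCA.map_surjective h₁ h₂ (by omega)

/-- The linear cellular automaton `(Tx)_n = ∑_{i=-r}^{r} λ_i x_{n+i} (mod a)` with both
`λ_{-r}` and `λ_r` units in `ℤ/aℤ` and `r ≥ 1` is surjective. -/
theorem lca_surjective (a r : ℕ) (ha : 2 ≤ a) (hr : 1 ≤ r) (lam : ℤ → ZMod a)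
    (h₁ : IsUnit (lam (-(r : ℤ)))) (h₂ : IsUnit (lam (r : ℤ)))
    (T : (ℤ → ZMod a) → (ℤ → ZMod a))
    (hT : ∀ x n, T x n = ∑ i ∈ Finset.Icc (-(r : ℤ)) (r : ℤ), lam i * x (n + i)) :
    Function.Surjective T :=
  lca_surjective_general a r lam h₁ h₂ T hT
end

section
/- Let μ be the uniform Bernoulli measure on (ℤ/aℤ)^ℤ, σ the shift, and T the one-sided linear CA (T x)_n = ∑_{i=0}^{r} λ_i x_{n+i} (mod a) with r ≥ 1 and λ_r a unit. For any two cylinder sets A, B depending on coordinates in [-M, M] and [-N, N] respectively, there exists n₀ such that for all n ≥ n₀ and all m ∈ ℕ, μ((T^m ∘ σ^n)^{-1} A ∩ B) = μ(A)·μ(B). -/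
open MeasureTheory Function

/-! `F = T^[m] ∘ σ^[n]` is right-permutive: `F x j` depends only on `x` on `[j + n, j + n + m r]`,
and injectively on `x (j + n + m r)` once the other coordinates are fixed. For `n > M + N` the
event `F x ∈ A` therefore depends only on coordinates disjoint from `[-N, N]`, hence is independent
of `B`. Overwriting each rightmost coordinate `j + n + m r` by `F x j` is a triangular, hence
bijective, recoding of the patterns on the window, and it carries `F⁻¹' A` onto a cylinder with as
many fixed coordinates as `A`; so `μ (F⁻¹' A) = μ A`. -/

theorem injective_of_triangular {ι : Type*} [LT ι] [WellFoundedLT ι] {β γ : ι → Type*}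
    {Φ : (∀ i, β i) → ∀ i, γ i}
    (h : ∀ w w' i, (∀ j < i, w j = w' j) → Φ w i = Φ w' i → w i = w' i) : Injective Φ := by
  intro w w' hΦ
  funext i
  induction i using WellFoundedLT.induction with
  | _ i ih => exact h w w' i ih (congrFun hΦ i)

section Cylinders

variable {ι α : Type*}

def cylinderSet (s : Finset ι) (c : ι → α) : Set (ι → α) := {x | ∀ i ∈ s, x i = c i}

lemma measurableSet_cylinderSet [MeasurableSpace α] [MeasurableSingletonClass α]
    (s : Finset ι) (c : ι → α) : MeasurableSet (cylinderSet s c) := by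
  have : cylinderSet s c = (s : Set ι).pi fun i => {c i} := by ext; simp [cylinderSet]
  exact this ▸ MeasurableSet.pi s.countable_toSet fun i _ => measurableSet_singleton (c i)

lemma cylinderSet_inter_cylinderSet [DecidableEq ι] {s t : Finset ι} (hst : Disjoint s t)
    (c d : ι → α) :
    cylinderSet s c ∩ cylinderSet t d = cylinderSet (s ∪ t) (s.piecewise c d) := by
  have hd : ∀ i ∈ t, s.piecewise c d i = d i :=
    fun i hi => s.piecewise_eq_of_notMem _ _ (Finset.disjoint_right.mp hst hi)
  ext x
  simp only [cylinderSet, Set.mem_inter_iff, Set.mem_ofPred_eq, Finset.mem_union]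
  constructor
  · rintro ⟨hc, hd'⟩ i (hi | hi)
    · rw [hc i hi, s.piecewise_eq_of_mem _ _ hi]
    · rw [hd' i hi, hd i hi]
  · intro h
    exact ⟨fun i hi => by rw [h i (.inl hi), s.piecewise_eq_of_mem _ _ hi],
      fun i hi => by rw [h i (.inr hi), hd i hi]⟩

lemma dependsOn_cylinderSet {s t : Finset ι} (hts : t ⊆ s) (c : ι → α) :
    DependsOn (· ∈ cylinderSet t c) (s : Set ι) := fun x y hxy =>
  propext <| forall₂_congr fun i hi => by rw [hxy i (hts hi)]

lemma measure_cylinderSet_inter_cylinderSet [DecidableEq ι] [MeasurableSpace α]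
    {μ : Measure (ι → α)} {κ : ENNReal} (hμ : ∀ s c, μ (cylinderSet s c) = κ ^ s.card)
    {s t : Finset ι} (hst : Disjoint s t) (c d : ι → α) :
    μ (cylinderSet s c ∩ cylinderSet t d) = μ (cylinderSet s c) * μ (cylinderSet t d) := by
  rw [cylinderSet_inter_cylinderSet hst, hμ, hμ, hμ, Finset.card_union_of_disjoint hst, pow_add]

variable [Inhabited α]

open Classical in
noncomputable def extendPattern (s : Finset ι) (w : s → α) : ι → α :=
  fun i => if h : i ∈ s then w ⟨i, h⟩ else default

lemma extendPattern_apply (s : Finset ι) (w : s → α) (i : s) : extendPattern s w i = w i :=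
  dif_pos i.2

lemma mem_cylinderSet_extendPattern_iff {s : Finset ι} {w : s → α} {x : ι → α} :
    x ∈ cylinderSet s (extendPattern s w) ↔ s.restrict x = w := by
  simp only [cylinderSet, Set.mem_ofPred_eq, funext_iff, Subtype.forall, Finset.restrict]
  exact forall₂_congr fun i hi => by rw [extendPattern_apply s w ⟨i, hi⟩]

lemma pairwise_disjoint_cylinderSet_extendPattern (s : Finset ι) :
    Pairwise (Disjoint on fun w : s → α => cylinderSet s (extendPattern s w)) :=
  fun _ _ hne => Set.disjoint_left.mpr fun _ hx hx' =>
    hne ((mem_cylinderSet_extendPattern_iff.mp hx).symm.trans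
      (mem_cylinderSet_extendPattern_iff.mp hx'))

lemma eq_iUnion_cylinderSet_extendPattern {s : Finset ι} {E : Set (ι → α)}
    (hE : DependsOn (· ∈ E) (s : Set ι)) :
    E = ⋃ w : {w : s → α // extendPattern s w ∈ E}, cylinderSet s (extendPattern s w) := by
  ext x
  simp only [Set.mem_iUnion, mem_cylinderSet_extendPattern_iff]
  constructor
  · intro hx
    refine ⟨⟨s.restrict x, ?_⟩, rfl⟩
    exact Eq.mp (hE fun i hi => (extendPattern_apply s (s.restrict x) ⟨i, hi⟩).symm) hx
  · rintro ⟨⟨w, hw⟩, rfl⟩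
    exact Eq.mp (hE fun i hi => extendPattern_apply s (s.restrict x) ⟨i, hi⟩) hw

variable [Countable α] [MeasurableSpace α] [MeasurableSingletonClass α]
  {μ : Measure (ι → α)} {κ : ENNReal}

lemma measure_eq_enatCard_mul (hμ : ∀ s c, μ (cylinderSet s c) = κ ^ s.card) {s : Finset ι}
    {E : Set (ι → α)} (hE : DependsOn (· ∈ E) (s : Set ι)) :
    μ E = ENat.card {w : s → α // extendPattern s w ∈ E} * κ ^ s.card := by
  conv_lhs => rw [eq_iUnion_cylinderSet_extendPattern hE]
  rw [measure_iUnion ((pairwise_disjoint_cylinderSet_extendPattern s).comp_of_injective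
    Subtype.val_injective) fun _ => measurableSet_cylinderSet _ _]
  simp only [hμ, ENNReal.tsum_const]

lemma measure_eq_of_equiv (hμ : ∀ s c, μ (cylinderSet s c) = κ ^ s.card) {s : Finset ι}
    {E E' : Set (ι → α)} (hE : DependsOn (· ∈ E) (s : Set ι)) (hE' : DependsOn (· ∈ E') (s : Set ι))
    (Φ : (s → α) ≃ (s → α)) (hΦ : ∀ w, extendPattern s w ∈ E ↔ extendPattern s (Φ w) ∈ E') :
    μ E = μ E' := by
  rw [measure_eq_enatCard_mul hμ hE, measure_eq_enatCard_mul hμ hE', 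
    ENat.card_congr (Φ.subtypeEquiv (q := fun w => extendPattern s w ∈ E') hΦ)]

lemma measure_inter_cylinderSet_of_dependsOn [DecidableEq ι]
    (hμ : ∀ s c, μ (cylinderSet s c) = κ ^ s.card) {s t : Finset ι} {E : Set (ι → α)}
    (hE : DependsOn (· ∈ E) (s : Set ι)) (hst : Disjoint s t) (d : ι → α) :
    μ (E ∩ cylinderSet t d) = μ E * μ (cylinderSet t d) := by
  have hdisj := (pairwise_disjoint_cylinderSet_extendPattern (α := α) s).comp_of_injective
    (Subtype.val_injective (p := fun w => extendPattern s w ∈ E))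
  rw [eq_iUnion_cylinderSet_extendPattern hE, Set.iUnion_inter,
    measure_iUnion (hdisj.mono fun _ _ h => h.mono Set.inter_subset_left Set.inter_subset_left)
      fun _ => (measurableSet_cylinderSet _ _).inter (measurableSet_cylinderSet _ _),
    measure_iUnion hdisj fun _ => measurableSet_cylinderSet _ _, ← ENNReal.tsum_mul_right]
  simp only [measure_cylinderSet_inter_cylinderSet hμ hst]

end Cylinders

section RightPermutive

open Set (EqOn Icc Ico)

variable {α : Type*}

structure IsRightPermutive (F : (ℤ → α) → ℤ → α) (p q : ℤ) : Prop where
  apply_eq : ∀ x y j, EqOn x y (Icc (j + p) (j + q)) → F x j = F y j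
  eq_of_apply_eq : ∀ x y j, EqOn x y (Ico (j + p) (j + q)) → F x j = F y j → x (j + q) = y (j + q)

lemma isRightPermutive_id : IsRightPermutive (id : (ℤ → α) → ℤ → α) 0 0 where
  apply_eq x y j h := h (by simp)
  eq_of_apply_eq x y j _ h := by simpa using h

lemma isRightPermutive_of_shift {σ : (ℤ → α) → ℤ → α} (hσ : ∀ x i, σ x i = x (i + 1)) :
    IsRightPermutive σ 1 1 where
  apply_eq x y j h := by rw [hσ, hσ, h (by simp)]
  eq_of_apply_eq x y j _ h := by rwa [hσ, hσ] at h

lemma isRightPermutive_of_linear {R : Type*} [Ring R] {r : ℕ} {lam : ℕ → R}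
    (hunit : IsUnit (lam r)) {T : (ℤ → R) → ℤ → R}
    (hT : ∀ x n, T x n = ∑ i ∈ Finset.range (r + 1), lam i * x (n + (i : ℤ))) :
    IsRightPermutive T 0 r where
  apply_eq x y j h := by
    rw [hT, hT]
    refine Finset.sum_congr rfl fun i hi => ?_
    have hir := Finset.mem_range_succ_iff.mp hi
    rw [h ⟨by omega, by omega⟩]
  eq_of_apply_eq x y j h hxy := by
    rw [hT, hT, Finset.sum_range_succ, Finset.sum_range_succ,
      Finset.sum_congr rfl fun i hi => by
        have hir := Finset.mem_range.mp hi
        rw [h ⟨by omega, by omega⟩]] at hxy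
    exact hunit.mul_left_cancel (add_left_cancel hxy)

namespace IsRightPermutive

variable {F G : (ℤ → α) → ℤ → α} {p q p' q' : ℤ}

lemma comp (hG : IsRightPermutive G p' q') (hF : IsRightPermutive F p q) (hpq' : p' ≤ q') :
    IsRightPermutive (G ∘ F) (p + p') (q + q') where
  apply_eq x y j h := hG.apply_eq _ _ j fun i hi =>
    hF.apply_eq x y i fun k hk => h ⟨by grind, by grind⟩
  eq_of_apply_eq x y j h hxy := by
    have hFq := hG.eq_of_apply_eq _ _ j
      (fun i hi => hF.apply_eq x y i fun k hk => h ⟨by grind, by grind⟩) hxy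
    have hx := hF.eq_of_apply_eq x y (j + q') (fun k hk => h ⟨by grind, by grind⟩) hFq
    rwa [add_assoc, add_comm q'] at hx

lemma iterate (hF : IsRightPermutive F p q) (hpq : p ≤ q) (m : ℕ) :
    IsRightPermutive F^[m] (m * p) (m * q) := by
  induction m with
  | zero => simpa using isRightPermutive_id
  | succ m ih =>
    rw [iterate_succ']
    convert hF.comp ih hpq using 1 <;> push_cast <;> ring

end IsRightPermutive

noncomputable def dependenceWindow (J : Finset ℤ) (p q : ℤ) : Finset ℤ :=
  J.biUnion fun j => Finset.Icc (j + p) (j + q)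

lemma mem_dependenceWindow {J : Finset ℤ} {p q j k : ℤ} (hj : j ∈ J)
    (hk : k ∈ Icc (j + p) (j + q)) :
    k ∈ dependenceWindow J p q :=
  Finset.mem_biUnion.mpr ⟨j, hj, Finset.mem_Icc.mpr hk⟩

lemma IsRightPermutive.dependsOn_preimage_cylinderSet {F : (ℤ → α) → ℤ → α} {p q : ℤ}
    (hF : IsRightPermutive F p q) (J : Finset ℤ) (c : ℤ → α) :
    DependsOn (· ∈ F ⁻¹' cylinderSet J c) (dependenceWindow J p q : Set ℤ) := fun x y hxy =>
  propext <| forall₂_congr fun j hj => by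
    rw [hF.apply_eq x y j fun k hk => hxy k (mem_dependenceWindow hj hk)]

variable [Inhabited α]

noncomputable def rightRecode (F : (ℤ → α) → ℤ → α) (J : Finset ℤ) (p q : ℤ)
    (w : dependenceWindow J p q → α) : dependenceWindow J p q → α :=
  fun i => if (i : ℤ) - q ∈ J then F (extendPattern _ w) (i - q) else w i

namespace IsRightPermutive

variable {F : (ℤ → α) → ℤ → α} {p q : ℤ}

lemma injective_rightRecode (hF : IsRightPermutive F p q) (J : Finset ℤ) :
    Injective (rightRecode F J p q) := by
  refine injective_of_triangular fun w w' i hlt heq => ?_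
  unfold rightRecode at heq
  split_ifs at heq with hi
  · have hlower : EqOn (extendPattern _ w) (extendPattern _ w') (Ico (i - q + p) (i - q + q)) :=
      fun k hk => by
        have hkW := mem_dependenceWindow hi (Set.Ico_subset_Icc_self hk)
        rw [extendPattern_apply _ w ⟨k, hkW⟩, extendPattern_apply _ w' ⟨k, hkW⟩,
          hlt ⟨k, hkW⟩ (show k < i by grind)]
    have hright := hF.eq_of_apply_eq _ _ _ hlower heq
    rwa [sub_add_cancel, extendPattern_apply, extendPattern_apply] at hright
  · exact heq

lemma mem_preimage_iff_rightRecode (hpq : p ≤ q) (J : Finset ℤ) (c : ℤ → α)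
    (w : dependenceWindow J p q → α) :
    extendPattern _ w ∈ F ⁻¹' cylinderSet J c ↔
      extendPattern _ (rightRecode F J p q w) ∈ cylinderSet (J.image (· + q)) (c <| · - q) := by
  simp only [cylinderSet, Set.mem_preimage, Set.mem_ofPred_eq, Finset.forall_mem_image]
  refine forall₂_congr fun j hj => ?_
  have hjW := mem_dependenceWindow hj (show j + q ∈ Icc (j + p) (j + q) by grind)
  rw [extendPattern_apply _ _ ⟨j + q, hjW⟩]
  simp [rightRecode, hj]

variable [Finite α] [MeasurableSpace α] [MeasurableSingletonClass α] {μ : Measure (ℤ → α)}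
  {κ : ENNReal}

theorem measure_preimage_cylinderSet (hμ : ∀ s c, μ (cylinderSet s c) = κ ^ s.card)
    (hF : IsRightPermutive F p q) (hpq : p ≤ q) (J : Finset ℤ) (c : ℤ → α) :
    μ (F ⁻¹' cylinderSet J c) = μ (cylinderSet J c) := by
  have himage : J.image (· + q) ⊆ dependenceWindow J p q := fun _ hi => by
    obtain ⟨j, hj, rfl⟩ := Finset.mem_image.mp hi
    exact mem_dependenceWindow hj ⟨by grind, le_rfl⟩
  calc μ (F ⁻¹' cylinderSet J c)
      = μ (cylinderSet (J.image (· + q)) (c <| · - q)) :=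
        measure_eq_of_equiv hμ (hF.dependsOn_preimage_cylinderSet J c)
          (dependsOn_cylinderSet himage _)
          (.ofBijective _ (Finite.injective_iff_bijective.mp (hF.injective_rightRecode J)))
          (mem_preimage_iff_rightRecode hpq J c)
    _ = μ (cylinderSet J c) := by
        rw [hμ, hμ, Finset.card_image_of_injective _ (add_left_injective q)]

theorem measure_preimage_cylinderSet_inter_cylinderSet
    (hμ : ∀ s c, μ (cylinderSet s c) = κ ^ s.card) (hF : IsRightPermutive F p q) (hpq : p ≤ q)
    {J V : Finset ℤ} (hJV : ∀ j ∈ J, ∀ v ∈ V, v < j + p) (c d : ℤ → α) :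
    μ (F ⁻¹' cylinderSet J c ∩ cylinderSet V d) = μ (cylinderSet J c) * μ (cylinderSet V d) := by
  have hdisj : Disjoint (dependenceWindow J p q) V := Finset.disjoint_left.mpr fun k hk hkV => by
    obtain ⟨j, hj, hkj⟩ := Finset.mem_biUnion.mp hk
    exact (hJV j hj k hkV).not_ge (Finset.mem_Icc.mp hkj).1
  rw [measure_inter_cylinderSet_of_dependsOn hμ (hF.dependsOn_preimage_cylinderSet J c) hdisj,
    hF.measure_preimage_cylinderSet hμ hpq]

end IsRightPermutive

end RightPermutive

theorem lca_shift_asymptotic_independence_general (a r : ℕ) (ha : 2 ≤ a)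
    [MeasurableSpace (ZMod a)] [MeasurableSingletonClass (ZMod a)]
    (lam : ℕ → ZMod a) (hunit : IsUnit (lam r))
    (μ : Measure (ℤ → ZMod a))
    (hμ : ∀ (s : Finset ℤ) (c : ℤ → ZMod a),
      μ {x | ∀ i ∈ s, x i = c i} = ((a : ENNReal))⁻¹ ^ s.card)
    (T σ : (ℤ → ZMod a) → (ℤ → ZMod a))
    (hT : ∀ x n, T x n = ∑ i ∈ Finset.range (r + 1), lam i * x (n + (i : ℤ)))
    (hσ : ∀ x i, σ x i = x (i + 1))
    (M N : ℕ) (c d : ℤ → ZMod a) (A B : Set (ℤ → ZMod a))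
    (hA : A = {x | ∀ i ∈ Finset.Icc (-(M : ℤ)) (M : ℤ), x i = c i})
    (hB : B = {x | ∀ i ∈ Finset.Icc (-(N : ℤ)) (N : ℤ), x i = d i}) :
    ∃ n₀ : ℕ, ∀ n ≥ n₀, ∀ m : ℕ,
      μ ((fun x => T^[m] (σ^[n] x)) ⁻¹' A ∩ B) = μ A * μ B := by
  have : NeZero a := ⟨by omega⟩
  refine ⟨M + N + 1, fun n hn m => ?_⟩
  have hmr : 0 ≤ (m : ℤ) * r := by positivity
  have hF := ((isRightPermutive_of_linear hunit hT).iterate (Int.natCast_nonneg r) m).comp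
    ((isRightPermutive_of_shift hσ).iterate le_rfl n) (by simpa using hmr)
  subst hA hB
  refine hF.measure_preimage_cylinderSet_inter_cylinderSet hμ (by simpa using hmr) ?_ c d
  intro j hj v hv
  simp only [Finset.mem_Icc] at hj hv
  omega

/-- For the one-sided linear CA `(Tx)_n = ∑_{i=0}^{r} λ_i x_{n+i} (mod a)` (with `r ≥ 1`,
`λ_r` a unit), the shift `σ`, and the uniform Bernoulli measure `μ`: for any cylinders
`A`, `B` on coordinates `[-M,M]`, `[-N,N]` there is `n₀` such that for all `n ≥ n₀` and
all `m`, `μ((T^m ∘ σ^n)⁻¹A ∩ B) = μ(A)·μ(B)`. -/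
theorem lca_shift_asymptotic_independence (a r : ℕ) (ha : 2 ≤ a) (hr : 1 ≤ r)
    [MeasurableSpace (ZMod a)] [MeasurableSingletonClass (ZMod a)]
    (lam : ℕ → ZMod a) (hunit : IsUnit (lam r))
    (μ : Measure (ℤ → ZMod a)) [IsProbabilityMeasure μ]
    (hμ : ∀ (s : Finset ℤ) (c : ℤ → ZMod a),
      μ {x | ∀ i ∈ s, x i = c i} = ((a : ENNReal))⁻¹ ^ s.card)
    (T σ : (ℤ → ZMod a) → (ℤ → ZMod a))
    (hT : ∀ x n, T x n = ∑ i ∈ Finset.range (r + 1), lam i * x (n + (i : ℤ)))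
    (hσ : ∀ x i, σ x i = x (i + 1))
    (M N : ℕ) (c d : ℤ → ZMod a) (A B : Set (ℤ → ZMod a))
    (hA : A = {x | ∀ i ∈ Finset.Icc (-(M : ℤ)) (M : ℤ), x i = c i})
    (hB : B = {x | ∀ i ∈ Finset.Icc (-(N : ℤ)) (N : ℤ), x i = d i}) :
    ∃ n₀ : ℕ, ∀ n ≥ n₀, ∀ m : ℕ,
      μ ((fun x => T^[m] (σ^[n] x)) ⁻¹' A ∩ B) = μ A * μ B :=
  lca_shift_asymptotic_independence_general a r ha lam hunit μ hμ T σ hT hσ M N c d A B hA hB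
end

section
/- Let μ be the uniform Bernoulli measure on (ℤ/2ℤ)^ℕ, σ the shift, and T the CA (Tx)_i = x_i + x_{i+1} (mod 2). For every N ≥ 1, the transformation S = σ ∘ T^N is ergodic with respect to μ: every S-invariant measurable set has measure 0 or 1. -/
/-!
The shift and `T` are additive, surjective, and each output coordinate only reads input
coordinates at or to the right of it (strictly to the right for the shift). A surjective additive
map pushes the uniform product measure to a translation-invariant probability measure, and the
only such measure is the uniform product measure itself, so `S` preserves `μ`. A strictly
`S`-invariant set `A` equals `(S^n)⁻¹ A` for every `n`, and `S^n` only reads coordinates `≥ n`, so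
`A` is a tail event and Kolmogorov's 0-1 law applies; almost invariant sets are reduced to
strictly invariant ones by the standard argument for ergodic maps.
-/

open MeasureTheory ProbabilityTheory Measure Filter Set
open scoped symmDiff ENNReal

section FiniteGroup

variable {G : Type*} [AddGroup G] [Fintype G] [MeasurableSpace G] [MeasurableSingletonClass G]

instance isAddLeftInvariant_uniformOn_univ : (uniformOn (univ : Set G)).IsAddLeftInvariant := by
  have : uniformOn (univ : Set G) = (Fintype.card G : ℝ≥0∞)⁻¹ • count := by
    ext s -
    rw [uniformOn_univ, Measure.smul_apply, smul_eq_mul, ENNReal.div_eq_inv_mul]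
  rw [this]
  infer_instance

theorem measure_singleton_eq_of_isAddLeftInvariant (ρ : Measure G) [ρ.IsAddLeftInvariant] (g : G) :
    ρ {g} = ρ {0} := by
  rw [← measure_preimage_add ρ g {g}]
  congr 1
  ext h
  simp

theorem measure_univ_eq_card_mul_of_isAddLeftInvariant (ρ : Measure G) [ρ.IsAddLeftInvariant] :
    ρ univ = Fintype.card G * ρ {0} := by
  rw [← Finset.coe_univ, ← sum_measure_singleton,
    Finset.sum_congr rfl fun g _ => measure_singleton_eq_of_isAddLeftInvariant ρ g,
    Finset.sum_const, nsmul_eq_mul, Finset.card_univ]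

theorem ext_of_isAddLeftInvariant {ρ ρ' : Measure G} [ρ.IsAddLeftInvariant]
    [ρ'.IsAddLeftInvariant] (h : ρ univ = ρ' univ) : ρ = ρ' := by
  rw [measure_univ_eq_card_mul_of_isAddLeftInvariant,
    measure_univ_eq_card_mul_of_isAddLeftInvariant ρ'] at h
  refine ext_of_singleton fun g => ?_
  rw [measure_singleton_eq_of_isAddLeftInvariant, measure_singleton_eq_of_isAddLeftInvariant ρ']
  exact (ENNReal.mul_right_inj (by simp) (by simp)).1 h

end FiniteGroup

instance isAddLeftInvariant_infinitePi {ι : Type*} {G : ι → Type*} [∀ i, AddGroup (G i)]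
    [∀ i, MeasurableSpace (G i)] [∀ i, MeasurableAdd (G i)] (P : ∀ i, Measure (G i))
    [∀ i, IsProbabilityMeasure (P i)] [∀ i, (P i).IsAddLeftInvariant] :
    (infinitePi P).IsAddLeftInvariant where
  map_add_left_eq_self g := by
    rw [show (g + ·) = fun x i => g i + x i from rfl,
      infinitePi_map_pi P fun i => measurable_const_add (g i)]
    simp only [map_add_left_eq_self]

section ProductGroup

variable {ι : Type*} {G : Type*} [AddGroup G] [Fintype G] [MeasurableSpace G]
  [MeasurableSingletonClass G]

local notation "unif" => infinitePi fun _ : ι => uniformOn (univ : Set G)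

theorem eq_infinitePi_uniformOn_of_isAddLeftInvariant (ρ : Measure (ι → G))
    [IsProbabilityMeasure ρ] [ρ.IsAddLeftInvariant] : ρ = unif := by
  classical
  refine IsProjectiveLimit.unique (fun J => ?_) (isProjectiveLimit_infinitePi _)
  have hJ : Measurable (J.restrict (π := fun _ => G)) := Finset.measurable_restrict J
  have : (ρ.map J.restrict).IsAddLeftInvariant :=
    isAddLeftInvariant_map ⟨J.restrict, fun _ _ => rfl⟩ hJ (Subtype.surjective_restrict _)
  have : IsProbabilityMeasure (ρ.map J.restrict) := isProbabilityMeasure_map hJ.aemeasurable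
  exact ext_of_isAddLeftInvariant (by simp)

theorem eq_infinitePi_uniformOn_of_measure_cylinder {μ : Measure (ι → G)}
    (hμ : ∀ (s : Finset ι) (c : ι → G),
      μ {x | ∀ i ∈ s, x i = c i} = (Fintype.card G : ℝ≥0∞)⁻¹ ^ s.card) : μ = unif := by
  refine IsProjectiveLimit.unique (fun J => ext_of_singleton fun d => ?_)
    (isProjectiveLimit_infinitePi _)
  obtain ⟨c, rfl⟩ := Subtype.surjective_restrict (β := fun _ => G) (· ∈ J) d
  rw [map_apply (Finset.measurable_restrict J) (measurableSet_singleton _), pi_singleton]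
  convert hμ J c using 2
  · ext x; simp [funext_iff, Finset.restrict]
  · simp [uniformOn_univ]

theorem measurePreserving_infinitePi_uniformOn {κ : Type*} (F : (ι → G) →+ (κ → G))
    (hF : Measurable F) (hsurj : Function.Surjective F) :
    MeasurePreserving F unif (infinitePi fun _ : κ => uniformOn (univ : Set G)) := by
  refine ⟨hF, ?_⟩
  have : IsProbabilityMeasure ((unif).map F) := isProbabilityMeasure_map hF.aemeasurable
  have : ((unif).map F).IsAddLeftInvariant := isAddLeftInvariant_map F.toAddHom hF hsurj
  exact eq_infinitePi_uniformOn_of_isAddLeftInvariant _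

end ProductGroup

section Tail

variable {X : Type*} [MeasurableSpace X]

theorem measurable_iterate_cylinderEvents_Ici {F : (ℕ → X) → (ℕ → X)}
    (hF : ∀ n, Measurable[cylinderEvents (Ici (n + 1)), cylinderEvents (Ici n)] F)
    (n : ℕ) : Measurable[cylinderEvents (Ici n)] F^[n] := by
  induction n with
  | zero =>
    rw [show Ici 0 = univ from eq_univ_of_forall Nat.zero_le, cylinderEvents_univ]
    exact measurable_id
  | succ n ih => exact Function.iterate_succ F n ▸ ih.comp (hF n)

theorem ergodic_of_measurable_iterate_cylinderEvents_Ici {μ : Measure (ℕ → X)}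
    [IsProbabilityMeasure μ] (hμ : iIndepFun (fun i x => x i) μ) {F : (ℕ → X) → (ℕ → X)}
    (hFμ : MeasurePreserving F μ μ)
    (hF : ∀ n, Measurable[cylinderEvents (Ici n)] F^[n]) : Ergodic F μ := by
  refine ⟨hFμ, ⟨fun A hA hinv => ?_⟩⟩
  have htail : MeasurableSet[limsup (fun n => MeasurableSpace.comap (fun x : ℕ → X => x n) ‹_›)
      atTop] A := by
    rw [limsup_eq_iInf_iSup_of_nat, MeasurableSpace.measurableSet_iInf]
    intro n
    have : F^[n] ⁻¹' A = A := by rw [preimage_iterate_eq]; exact Function.iterate_fixed hinv n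
    exact this ▸ hF n hA
  rcases measure_zero_or_one_of_measurableSet_limsup_atTop
    (fun n => (measurable_pi_apply n).comap_le) ((iIndepFun_iff_iIndep _ _ _).1 hμ) htail with h | h
  · exact eventuallyConst_set'.2 (Or.inl (ae_eq_empty.2 h))
  · exact eventuallyConst_set'.2
      (Or.inr ((ae_eq_univ_iff_measure_eq hA.nullMeasurableSet).2 (by simp [h])))

end Tail

section Shift

variable {X : Type*} {σ : (ℕ → X) → (ℕ → X)}

theorem surjective_of_apply_eq_succ (hσ : ∀ x i, σ x i = x (i + 1)) : Function.Surjective σ :=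
  fun y => ⟨fun i => y (i - 1), funext fun i => by simp [hσ]⟩

theorem map_add_of_apply_eq_succ [Add X] (hσ : ∀ x i, σ x i = x (i + 1)) (x y : ℕ → X) :
    σ (x + y) = σ x + σ y :=
  funext fun i => by simp [hσ]

theorem measurable_cylinderEvents_Ici_of_apply_eq_succ [MeasurableSpace X]
    (hσ : ∀ x i, σ x i = x (i + 1)) (n : ℕ) :
    Measurable[cylinderEvents (Ici (n + 1)), cylinderEvents (Ici n)] σ :=
  measurable_cylinderEvents_iff.2 fun i hi => by
    simp_rw [hσ]
    exact measurable_cylinderEvent_apply (mem_Ici.2 (Nat.succ_le_succ hi))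

end Shift

section CellularAutomaton

variable {G : Type*} {T : (ℕ → G) → (ℕ → G)}

theorem surjective_of_apply_eq_add_succ [AddGroup G] (hT : ∀ x i, T x i = x i + x (i + 1)) :
    Function.Surjective T := by
  intro y
  let x : ℕ → G := fun i => Nat.rec 0 (fun j xj => -xj + y j) i
  exact ⟨x, funext fun i => by simp [hT, x]⟩

theorem map_add_of_apply_eq_add_succ [AddCommSemigroup G] (hT : ∀ x i, T x i = x i + x (i + 1))
    (x y : ℕ → G) : T (x + y) = T x + T y :=
  funext fun i => by simp only [hT, Pi.add_apply]; exact add_add_add_comm _ _ _ _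

theorem measurable_cylinderEvents_Ici_of_apply_eq_add_succ [Add G] [MeasurableSpace G]
    [MeasurableAdd₂ G] (hT : ∀ x i, T x i = x i + x (i + 1)) (n : ℕ) :
    Measurable[cylinderEvents (Ici n), cylinderEvents (Ici n)] T :=
  measurable_cylinderEvents_iff.2 fun i hi => by
    simp_rw [hT]
    exact (measurable_cylinderEvent_apply hi).add
      (measurable_cylinderEvent_apply (mem_Ici.2 (Nat.le_succ_of_le hi)))

end CellularAutomaton

theorem ergodic_shift_comp_iterate {G : Type*} [AddCommGroup G] [Fintype G] [MeasurableSpace G]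
    [MeasurableSingletonClass G] {σ T : (ℕ → G) → (ℕ → G)} (hσ : ∀ x i, σ x i = x (i + 1))
    (hT : ∀ x i, T x i = x i + x (i + 1)) (N : ℕ) :
    Ergodic (fun x => σ (T^[N] x)) (infinitePi fun _ => uniformOn (univ : Set G)) := by
  have hstep (n : ℕ) : Measurable[cylinderEvents (Ici (n + 1)), cylinderEvents (Ici n)]
      (fun x => σ (T^[N] x)) :=
    (measurable_cylinderEvents_Ici_of_apply_eq_succ hσ n).comp
      ((measurable_cylinderEvents_Ici_of_apply_eq_add_succ hT (n + 1)).iterate N)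
  have hiter := measurable_iterate_cylinderEvents_Ici hstep
  let Tₐ : (ℕ → G) →+ (ℕ → G) := .mk' T (map_add_of_apply_eq_add_succ hT)
  let S : (ℕ → G) →+ (ℕ → G) := .mk' (fun x => σ (Tₐ^[N] x)) fun x y => by
    rw [iterate_map_add, map_add_of_apply_eq_succ hσ]
  refine ergodic_of_measurable_iterate_cylinderEvents_Ici
    (iIndepFun_infinitePi fun _ => measurable_id) ?_ hiter
  exact measurePreserving_infinitePi_uniformOn S ((hiter 1).mono cylinderEvents_le_pi le_rfl)
    ((surjective_of_apply_eq_succ hσ).comp ((surjective_of_apply_eq_add_succ hT).iterate N))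

theorem shift_comp_CA_ergodic_general
    [MeasurableSpace (ZMod 2)] [MeasurableSingletonClass (ZMod 2)]
    (μ : Measure (ℕ → ZMod 2))
    (hμ : ∀ (s : Finset ℕ) (c : ℕ → ZMod 2),
      μ {x | ∀ i ∈ s, x i = c i} = ((2 : ENNReal))⁻¹ ^ s.card)
    (T σ : (ℕ → ZMod 2) → (ℕ → ZMod 2))
    (hT : ∀ x i, T x i = x i + x (i + 1))
    (hσ : ∀ x i, σ x i = x (i + 1))
    (N : ℕ)
    (S : (ℕ → ZMod 2) → (ℕ → ZMod 2)) (hS : S = fun x => σ (T^[N] x)) :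
    ∀ A : Set (ℕ → ZMod 2), MeasurableSet A → μ ((S ⁻¹' A) ∆ A) = 0 →
      μ A = 0 ∨ μ A = 1 := by
  intro A hA hinv
  obtain rfl : μ = infinitePi fun _ => uniformOn univ :=
    eq_infinitePi_uniformOn_of_measure_cylinder (by simpa using hμ)
  subst hS
  rcases (ergodic_shift_comp_iterate hσ hT N).quasiErgodic.ae_empty_or_univ₀ hA.nullMeasurableSet
    (measure_symmDiff_eq_zero_iff.1 hinv) with h | h
  · exact Or.inl (ae_eq_empty.1 h)
  · exact Or.inr (by rw [measure_congr h, measure_univ])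

/-- For the uniform Bernoulli measure on `(ℤ/2ℤ)^ℕ`, the shift `σ` and the CA
`(Tx)_i = x_i + x_{i+1}`, the map `S = σ ∘ T^N` is ergodic for every `N ≥ 1`:
every `S`-invariant (up to null sets) measurable set has measure `0` or `1`. -/
theorem shift_comp_CA_ergodic
    [MeasurableSpace (ZMod 2)] [MeasurableSingletonClass (ZMod 2)]
    (μ : Measure (ℕ → ZMod 2)) [IsProbabilityMeasure μ]
    (hμ : ∀ (s : Finset ℕ) (c : ℕ → ZMod 2),
      μ {x | ∀ i ∈ s, x i = c i} = ((2 : ENNReal))⁻¹ ^ s.card)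
    (T σ : (ℕ → ZMod 2) → (ℕ → ZMod 2))
    (hT : ∀ x i, T x i = x i + x (i + 1))
    (hσ : ∀ x i, σ x i = x (i + 1))
    (N : ℕ) (hN : 1 ≤ N)
    (S : (ℕ → ZMod 2) → (ℕ → ZMod 2)) (hS : S = fun x => σ (T^[N] x)) :
    ∀ A : Set (ℕ → ZMod 2), MeasurableSet A → μ ((S ⁻¹' A) ∆ A) = 0 →
      μ A = 0 ∨ μ A = 1 :=
  shift_comp_CA_ergodic_general μ hμ T σ hT hσ N S hS
end

section
/- Let (X,𝒳,μ,Φ) be a ℤ²-measure-preserving system and v = (1,β) a direction. If for all B, C ∈ 𝒳 and some b > 0, lim_{k→∞} (1/#Λ_k^v(b)) ∑_{(m,n)∈Λ_k^v(b)} |μ(Φ^{-(m,n)}B ∩ C) - μ(B)μ(C)| = 0, then the same holds for every b > 0. -/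
open Filter MeasureTheory

/-!
Since `β m` comes within `b₀ / 2` of an integer for some `m` in every window of `M + 1` consecutive
integers, every point of the band `Λ_k(b)` is moved into `Λ_{k+M}(b₀)` by a translation from a fixed
finite set `F`. The defect sum over `Λ_k(b)` is then at most the sum over `s ∈ F` of the defect sums
over `Λ_{k+M}(b₀)` with `B` replaced by `Φ (-s) ⁻¹' B`, each of which is `o(#Λ_{k+M}(b₀))` by
hypothesis. Both bands have cardinality of order `k`, so the averages over `Λ_k(b)` tend to `0`
as well.
-/

theorem exists_nat_le_abs_add_mul_sub_int_le_of_pos {δ : ℝ} (hδ : 0 < δ) (x : ℝ) :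
    ∃ j : ℕ, j ≤ ⌈1 / δ⌉₊ ∧ ∃ n : ℤ, |x + j * δ - n| ≤ δ := by
  have hx0 : 0 ≤ (⌈x⌉ : ℝ) - x := sub_nonneg.2 (Int.le_ceil x)
  have hx1 : (⌈x⌉ : ℝ) - x < 1 := by linarith [Int.ceil_lt_add_one x]
  refine ⟨⌈(⌈x⌉ - x) / δ⌉₊, Nat.ceil_mono (div_le_div_of_nonneg_right hx1.le hδ.le), ⌈x⌉, ?_⟩
  set j := ⌈(⌈x⌉ - x) / δ⌉₊
  have hj0 : ⌈x⌉ - x ≤ j * δ := (div_le_iff₀ hδ).1 (Nat.le_ceil _)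
  have hj1 : (j - 1) * δ < ⌈x⌉ - x :=
    (lt_div_iff₀ hδ).1 (by linarith [Nat.ceil_lt_add_one (div_nonneg hx0 hδ.le)])
  rw [abs_le]
  constructor <;> nlinarith

theorem exists_nat_le_abs_add_mul_sub_int_le {δ : ℝ} (hδ : δ ≠ 0) (x : ℝ) :
    ∃ j : ℕ, j ≤ ⌈1 / |δ|⌉₊ ∧ ∃ n : ℤ, |x + j * δ - n| ≤ |δ| := by
  rcases hδ.lt_or_gt with hneg | hpos
  · obtain ⟨j, hj, n, hn⟩ := exists_nat_le_abs_add_mul_sub_int_le_of_pos (neg_pos.2 hneg) (-x)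
    refine ⟨j, by rwa [abs_of_neg hneg], -n, ?_⟩
    rw [abs_of_neg hneg, ← abs_neg]
    convert hn using 2
    push_cast
    ring
  · simpa only [abs_of_pos hpos] using exists_nat_le_abs_add_mul_sub_int_le_of_pos hpos x

theorem exists_nat_lt_mul_add_eq_int {β : ℝ} {q : ℕ} {a : ℤ} (hq : 0 < q) (h : q * β = a)
    (m : ℤ) : ∃ p : ℕ, p < q ∧ ∃ n : ℤ, β * (m + p) = n := by
  obtain ⟨r, hr⟩ : ∃ r : ℕ, (r : ℤ) = (-m) % q :=
    ⟨_, Int.toNat_of_nonneg (Int.emod_nonneg _ (by omega))⟩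
  obtain ⟨t, ht⟩ : (q : ℤ) ∣ m + r := by
    rw [hr, Int.dvd_iff_emod_eq_zero, Int.add_emod_emod, add_neg_cancel, Int.zero_emod]
  refine ⟨r, by have := Int.emod_lt_of_pos (-m) (by omega : (0 : ℤ) < q); omega, a * t, ?_⟩
  have ht' : (m : ℝ) + r = q * t := by exact_mod_cast ht
  rw [ht', ← mul_assoc, mul_comm β, h]
  push_cast
  ring

/- Dirichlet gives `q` with `qβ` within `ε` of an integer; moving along multiples of `q` then
shifts `βm` modulo `1` by steps of size at most `ε`, unless `qβ ∈ ℤ`, where `β(m + p) ∈ ℤ` as soon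
as `q ∣ m + p`. -/
theorem exists_forall_exists_nat_le_abs_mul_sub_int_le (β : ℝ) {ε : ℝ} (hε : 0 < ε) :
    ∃ M : ℕ, ∀ m : ℤ, ∃ p : ℕ, p ≤ M ∧ ∃ n : ℤ, |β * (m + p) - n| ≤ ε := by
  obtain ⟨N, hN⟩ := exists_nat_gt (1 / ε)
  have hN0 : 0 < N := by exact_mod_cast (one_div_pos.2 hε).trans hN
  obtain ⟨q, hq, -, hqβ⟩ := Real.exists_nat_abs_mul_sub_round_le β hN0
  set δ := q * β - round (q * β)
  have hδε : |δ| ≤ ε := by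
    refine hqβ.trans ?_
    rw [div_le_iff₀ (by positivity)]
    rw [div_lt_iff₀ hε] at hN
    nlinarith
  rcases eq_or_ne δ 0 with hδ | hδ
  · refine ⟨q, fun m => ?_⟩
    obtain ⟨p, hp, n, hn⟩ := exists_nat_lt_mul_add_eq_int hq (sub_eq_zero.1 hδ) m
    exact ⟨p, hp.le, n, by simp [hn, hε.le]⟩
  · refine ⟨⌈1 / |δ|⌉₊ * q, fun m => ?_⟩
    obtain ⟨j, hj, n, hn⟩ := exists_nat_le_abs_add_mul_sub_int_le hδ (β * m)
    refine ⟨j * q, Nat.mul_le_mul_right q hj, n + j * round (q * β), ?_⟩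
    calc |β * (m + (j * q : ℕ)) - (n + j * round (q * β) : ℤ)| = |β * m + j * δ - n| := by
          simp only [δ]
          push_cast
          ring_nf
      _ ≤ ε := hn.trans hδε

open Finset in
theorem Finset.sum_le_sum_sum_sub_of_forall_exists_add_mem {G : Type*} [AddCommGroup G]
    [DecidableEq G] {f : G → ℝ} (hf : ∀ x, 0 ≤ f x) {S T F : Finset G}
    (hcover : ∀ x ∈ S, ∃ s ∈ F, x + s ∈ T) :
    ∑ x ∈ S, f x ≤ ∑ s ∈ F, ∑ y ∈ T, f (y - s) := by
  calc ∑ x ∈ S, f x ≤ ∑ x ∈ S, ∑ s ∈ F with x + s ∈ T, f x := by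
        refine sum_le_sum fun x hx => ?_
        obtain ⟨s, hs, hsT⟩ := hcover x hx
        exact single_le_sum (fun _ _ => hf x) (mem_filter.2 ⟨hs, hsT⟩)
    _ = ∑ s ∈ F, ∑ x ∈ S with x + s ∈ T, f x := sum_comm' (by simp only [mem_filter]; tauto)
    _ ≤ ∑ s ∈ F, ∑ x ∈ T.map (Equiv.subRight s).toEmbedding, f x := by
        refine sum_le_sum fun s _ => sum_le_sum_of_subset_of_nonneg ?_ fun x _ _ => hf x
        intro x hx
        simpa using (mem_filter.1 hx).2
    _ = ∑ s ∈ F, ∑ y ∈ T, f (y - s) := by simp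

open Finset in
theorem tendsto_one_div_card_mul_sum_of_forall_exists_add_mem {G : Type*} [AddCommGroup G]
    [DecidableEq G] {f : G → ℝ} (hf : ∀ x, 0 ≤ f x) {S T : ℕ → Finset G} {F : Finset G} {C : ℝ}
    (hcover : ∀ k, ∀ x ∈ S k, ∃ s ∈ F, x + s ∈ T k)
    (hcard : ∀ᶠ k in atTop, ((T k).card : ℝ) / (S k).card ≤ C)
    (hT : ∀ s ∈ F,
      Tendsto (fun k => 1 / ((T k).card : ℝ) * ∑ y ∈ T k, f (y - s)) atTop (nhds 0)) :
    Tendsto (fun k => 1 / ((S k).card : ℝ) * ∑ x ∈ S k, f x) atTop (nhds 0) := by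
  set avg : G → ℕ → ℝ := fun s k => 1 / ((T k).card : ℝ) * ∑ y ∈ T k, f (y - s)
  have havg : ∀ s k, 0 ≤ avg s k := fun s k =>
    mul_nonneg (by positivity) (sum_nonneg fun y _ => hf _)
  have hbound :
      ∀ᶠ k in atTop, 1 / ((S k).card : ℝ) * ∑ x ∈ S k, f x ≤ C * ∑ s ∈ F, avg s k := by
    filter_upwards [hcard] with k hk
    calc 1 / ((S k).card : ℝ) * ∑ x ∈ S k, f x
        ≤ 1 / ((S k).card : ℝ) * ∑ s ∈ F, ∑ y ∈ T k, f (y - s) :=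
          mul_le_mul_of_nonneg_left (sum_le_sum_sum_sub_of_forall_exists_add_mem hf (hcover k))
            (by positivity)
      _ = ∑ s ∈ F, ((T k).card : ℝ) / (S k).card * avg s k := by
          rw [mul_sum]
          refine sum_congr rfl fun s _ => ?_
          obtain hT0 | hT0 := eq_or_ne ((T k).card : ℝ) 0
          · simp [card_eq_zero.1 (by exact_mod_cast hT0)]
          · simp only [avg]
            field_simp
      _ ≤ C * ∑ s ∈ F, avg s k := by
          rw [mul_sum]
          exact sum_le_sum fun s _ => mul_le_mul_of_nonneg_right hk (havg s k)
  have hlim : Tendsto (fun k => C * ∑ s ∈ F, avg s k) atTop (nhds 0) := by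
    have := (tendsto_finsetSum F hT).const_mul C
    rwa [sum_const_zero, mul_zero] at this
  exact tendsto_of_tendsto_of_tendsto_of_le_of_le' tendsto_const_nhds hlim
    (Eventually.of_forall fun k => mul_nonneg (by positivity) (sum_nonneg fun x _ => hf x)) hbound

/-- `Λ b k` is the band `Λ_k^v(b)` of the direction `v = (1, β)`. -/
def IsBandFamily (β : ℝ) (Λ : ℝ → ℕ → Finset (ℤ × ℤ)) : Prop :=
  ∀ (b : ℝ) (k : ℕ) (p : ℤ × ℤ), p ∈ Λ b k ↔
    0 ≤ p.1 ∧ p.1 ≤ (k : ℤ) - 1 ∧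
      β * (p.1 : ℝ) - b / 2 ≤ (p.2 : ℝ) ∧ (p.2 : ℝ) ≤ β * (p.1 : ℝ) + b / 2

namespace IsBandFamily

variable {β : ℝ} {Λ : ℝ → ℕ → Finset (ℤ × ℤ)}

theorem card_le (hΛ : IsBandFamily β Λ) {b : ℝ} (hb : 0 ≤ b) (k : ℕ) :
    ((Λ b k).card : ℝ) ≤ (b + 1) * k := by
  have hinj := Finset.card_le_card_of_injOn
    (fun p : ℤ × ℤ => (p.1, p.2 - ⌈β * p.1 - b / 2⌉)) (s := Λ b k)
    (t := Finset.Ico 0 (k : ℤ) ×ˢ Finset.Icc 0 ⌊b⌋) ?_ ?_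
  · have hfloor : (0 : ℤ) ≤ ⌊b⌋ := Int.floor_nonneg.2 hb
    simp only [Finset.card_product, Int.card_Ico, Int.card_Icc, sub_zero, Int.toNat_natCast]
      at hinj
    have hcast : (((⌊b⌋ + 1).toNat : ℕ) : ℝ) = ⌊b⌋ + 1 := by
      exact_mod_cast Int.toNat_of_nonneg (by omega : (0 : ℤ) ≤ ⌊b⌋ + 1)
    calc ((Λ b k).card : ℝ) ≤ (k * (⌊b⌋ + 1).toNat : ℕ) := by exact_mod_cast hinj
      _ = (⌊b⌋ + 1) * k := by push_cast [hcast]; ring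
      _ ≤ (b + 1) * k := by gcongr; exact Int.floor_le b
  · intro p hp
    obtain ⟨h1, h2, h3, h4⟩ := (hΛ b k p).1 hp
    have hlo : ⌈β * p.1 - b / 2⌉ ≤ p.2 := Int.ceil_le.2 h3
    have hhi : p.2 - ⌈β * p.1 - b / 2⌉ ≤ ⌊b⌋ :=
      Int.le_floor.2 (by push_cast; linarith [Int.le_ceil (β * p.1 - b / 2)])
    simp only [Finset.coe_product, Finset.coe_Ico, Finset.coe_Icc, Set.mem_prod, Set.mem_Ico,
      Set.mem_Icc]
    omega
  · intro p _ q _ hpq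
    simp only [Prod.mk.injEq] at hpq
    obtain ⟨h1, h2⟩ := hpq
    rw [h1] at h2
    exact Prod.ext h1 (by omega)

theorem le_card (hΛ : IsBandFamily β Λ) {b : ℝ} {M : ℕ}
    (hM : ∀ m : ℤ, ∃ p : ℕ, p ≤ M ∧ ∃ n : ℤ, |β * (m + p) - n| ≤ b / 2) (k : ℕ) :
    (k : ℝ) ≤ (M + 1) * (Λ b k).card + M := by
  choose P hP N hN using hM
  set col : ℕ → ℕ := fun j => (M + 1) * j + P ((M + 1) * j : ℕ)
  have hcol : ∀ j, (M + 1) * j ≤ col j ∧ col j < (M + 1) * (j + 1) := fun j =>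
    ⟨Nat.le_add_right _ _, by simp only [col]; linarith [hP ((M + 1) * j : ℕ)]⟩
  have hinj := Finset.card_le_card_of_injOn (fun j => ((col j : ℤ), N ((M + 1) * j : ℕ)))
    (s := Finset.range (k / (M + 1))) (t := Λ b k) ?_ ?_
  · have hk := Nat.lt_div_mul_add (a := k) (Nat.succ_pos M)
    rw [Finset.card_range] at hinj
    have : k ≤ (M + 1) * (Λ b k).card + M := by nlinarith
    exact_mod_cast this
  · intro j hj
    have hjk : (j + 1) * (M + 1) ≤ k :=
      (Nat.le_div_iff_mul_le (Nat.succ_pos M)).1 (Finset.mem_range.1 hj)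
    obtain ⟨hn1, hn2⟩ := abs_le.1 (hN ((M + 1) * j : ℕ))
    have hlt : col j < k := by linarith [(hcol j).2]
    rw [Finset.mem_coe, hΛ]
    refine ⟨by positivity, by dsimp only; omega, ?_, ?_⟩ <;>
    · simp only [col]
      push_cast at hn1 hn2 ⊢
      linarith
  · intro j _ j' _ h
    simp only [Prod.mk.injEq, Nat.cast_inj] at h
    have := hcol j
    have := hcol j'
    rcases lt_trichotomy j j' with hlt | heq | hgt
    · nlinarith
    · exact heq
    · nlinarith

theorem exists_eventually_card_div_card_le (hΛ : IsBandFamily β Λ) {b b₀ : ℝ} (hb : 0 < b)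
    (hb₀ : 0 ≤ b₀) (M₀ : ℕ) :
    ∃ C : ℝ, ∀ᶠ k in atTop, ((Λ b₀ (k + M₀)).card : ℝ) / (Λ b k).card ≤ C := by
  obtain ⟨M, hM⟩ := exists_forall_exists_nat_le_abs_mul_sub_int_le β (half_pos hb)
  refine ⟨2 * (b₀ + 1) * (M + 1), ?_⟩
  filter_upwards [eventually_ge_atTop (M₀ + 2 * M + 1)] with k hk
  have hlow := hΛ.le_card hM k
  have hup := hΛ.card_le hb₀ (k + M₀)
  have hk' : (M₀ + 2 * M + 1 : ℝ) ≤ k := by exact_mod_cast hk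
  have hpos : (0 : ℝ) < (Λ b k).card := by nlinarith
  rw [div_le_iff₀ hpos]
  push_cast at hup
  nlinarith

theorem exists_forall_exists_add_mem (hΛ : IsBandFamily β Λ) {b₀ : ℝ} (hb₀ : 0 < b₀) (b : ℝ) :
    ∃ M : ℕ, ∃ F : Finset (ℤ × ℤ), ∀ k, ∀ x ∈ Λ b k, ∃ s ∈ F, x + s ∈ Λ b₀ (k + M) := by
  obtain ⟨M, hM⟩ := exists_forall_exists_nat_le_abs_mul_sub_int_le β (half_pos hb₀)
  set R : ℤ := ⌈b₀ / 2 + |β| * M + b / 2⌉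
  refine ⟨M, Finset.Icc 0 (M : ℤ) ×ˢ Finset.Icc (-R) R, fun k x hx => ?_⟩
  obtain ⟨h1, h2, h3, h4⟩ := (hΛ b k x).1 hx
  obtain ⟨p, hpM, n, hn⟩ := hM x.1
  have hpM' : (p : ℝ) ≤ M := by exact_mod_cast hpM
  have hshift : |(n : ℝ) - x.2| ≤ b₀ / 2 + |β| * M + b / 2 := by
    calc |(n : ℝ) - x.2| = |-(β * (x.1 + p) - n) + β * p + (β * x.1 - x.2)| := by ring_nf
      _ ≤ |β * (x.1 + p) - n| + |β| * p + |β * x.1 - x.2| := by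
          refine (abs_add_three _ _ _).trans_eq ?_
          rw [abs_neg, abs_mul, Nat.abs_cast]
      _ ≤ b₀ / 2 + |β| * M + b / 2 := by
          gcongr
          exact abs_le.2 ⟨by linarith, by linarith⟩
  have hR : |n - x.2| ≤ R := Int.le_ceil_iff.2 (by push_cast; linarith)
  obtain ⟨hn1, hn2⟩ := abs_le.1 hn
  refine ⟨(p, n - x.2), ?_, ?_⟩
  · simp only [Finset.mem_product, Finset.mem_Icc]
    exact ⟨⟨by positivity, by exact_mod_cast hpM⟩, abs_le.1 hR⟩
  · rw [hΛ]
    simp only [Prod.fst_add, Prod.snd_add, add_sub_cancel]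
    push_cast
    refine ⟨by positivity, by omega, by linarith, by linarith⟩

end IsBandFamily

def mixingDefect {X : Type*} [MeasurableSpace X] (μ : Measure X) (Φ : ℤ × ℤ → X → X)
    (B C : Set X) (p : ℤ × ℤ) : ℝ :=
  |(μ (Φ p ⁻¹' B ∩ C)).toReal - (μ B).toReal * (μ C).toReal|

theorem mixingDefect_sub {X : Type*} [MeasurableSpace X] {μ : Measure X} {Φ : ℤ × ℤ → X → X}
    {s : ℤ × ℤ} (hs : MeasurePreserving (Φ (-s)) μ μ) (hact : ∀ v w, Φ (v + w) = Φ v ∘ Φ w)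
    {B : Set X} (hB : MeasurableSet B) (C : Set X) (p : ℤ × ℤ) :
    mixingDefect μ Φ B C (p - s) = mixingDefect μ Φ (Φ (-s) ⁻¹' B) C p := by
  rw [mixingDefect, mixingDefect, sub_eq_neg_add p s, hact, Set.preimage_comp,
    hs.measure_preimage hB.nullMeasurableSet]

theorem directional_wm_independent_of_band_general {X : Type} [MeasurableSpace X]
    (μ : Measure X)
    (Φ : ℤ × ℤ → X → X)
    (hmp : ∀ v, MeasurePreserving (Φ v) μ μ)
    (hact : ∀ v w, Φ (v + w) = Φ v ∘ Φ w)
    (β : ℝ)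
    (Λ : ℝ → ℕ → Finset (ℤ × ℤ))
    (hΛ : ∀ (b : ℝ) (k : ℕ) (p : ℤ × ℤ), p ∈ Λ b k ↔
      0 ≤ p.1 ∧ p.1 ≤ (k : ℤ) - 1 ∧
        β * (p.1 : ℝ) - b / 2 ≤ (p.2 : ℝ) ∧ (p.2 : ℝ) ≤ β * (p.1 : ℝ) + b / 2)
    (h : ∃ b > (0 : ℝ), ∀ B C : Set X, MeasurableSet B → MeasurableSet C →
      Tendsto (fun k : ℕ => (1 / ((Λ b k).card : ℝ)) *
          ∑ p ∈ Λ b k, |(μ (Φ p ⁻¹' B ∩ C)).toReal - (μ B).toReal * (μ C).toReal|)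
        atTop (nhds 0)) :
    ∀ b > (0 : ℝ), ∀ B C : Set X, MeasurableSet B → MeasurableSet C →
      Tendsto (fun k : ℕ => (1 / ((Λ b k).card : ℝ)) *
          ∑ p ∈ Λ b k, |(μ (Φ p ⁻¹' B ∩ C)).toReal - (μ B).toReal * (μ C).toReal|)
        atTop (nhds 0) := by
  obtain ⟨b₀, hb₀, h₀⟩ := h
  intro b hb B C hB hC
  obtain ⟨M, F, hcover⟩ := IsBandFamily.exists_forall_exists_add_mem hΛ hb₀ b
  obtain ⟨K, hK⟩ := IsBandFamily.exists_eventually_card_div_card_le hΛ hb hb₀.le M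
  refine tendsto_one_div_card_mul_sum_of_forall_exists_add_mem (f := mixingDefect μ Φ B C)
    (fun _ => abs_nonneg _) hcover hK fun s _ => ?_
  have hshifted := (tendsto_add_atTop_iff_nat M).2 (h₀ _ C ((hmp (-s)).measurable hB) hC)
  simp only [mixingDefect_sub (hmp (-s)) hact hB]
  exact hshifted

/-- If the directional weak mixing averages along the band `Λ^v(b)` (direction
`v = (1,β)`, width `b`) converge to `0` for some `b > 0`, then they converge to `0`
for every `b > 0`. -/
theorem directional_wm_independent_of_band {X : Type} [MeasurableSpace X]
    (μ : Measure X) [IsProbabilityMeasure μ]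
    (Φ : ℤ × ℤ → X → X)
    (hmp : ∀ v, MeasurePreserving (Φ v) μ μ)
    (hact : ∀ v w, Φ (v + w) = Φ v ∘ Φ w)
    (β : ℝ)
    (Λ : ℝ → ℕ → Finset (ℤ × ℤ))
    (hΛ : ∀ (b : ℝ) (k : ℕ) (p : ℤ × ℤ), p ∈ Λ b k ↔
      0 ≤ p.1 ∧ p.1 ≤ (k : ℤ) - 1 ∧
        β * (p.1 : ℝ) - b / 2 ≤ (p.2 : ℝ) ∧ (p.2 : ℝ) ≤ β * (p.1 : ℝ) + b / 2)
    (h : ∃ b > (0 : ℝ), ∀ B C : Set X, MeasurableSet B → MeasurableSet C →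
      Tendsto (fun k : ℕ => (1 / ((Λ b k).card : ℝ)) *
          ∑ p ∈ Λ b k, |(μ (Φ p ⁻¹' B ∩ C)).toReal - (μ B).toReal * (μ C).toReal|)
        atTop (nhds 0)) :
    ∀ b > (0 : ℝ), ∀ B C : Set X, MeasurableSet B → MeasurableSet C →
      Tendsto (fun k : ℕ => (1 / ((Λ b k).card : ℝ)) *
          ∑ p ∈ Λ b k, |(μ (Φ p ⁻¹' B ∩ C)).toReal - (μ B).toReal * (μ C).toReal|)
        atTop (nhds 0) :=
  directional_wm_independent_of_band_general μ Φ hmp hact β Λ hΛ h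
end
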